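/- arXiv:0805.2520 — 2 statements merged into one kernel-verified Lean document; each statement's English description precedes it below -/
import Mathlib

section
/- Let h be a real Lie algebra, V a vector space with dim V = dim h, and π a representation of h on V. If J is an abelian totally real complex structure on the semidirect product h ⋉_π V, then h is abelian and π(x)(Jy) = π(y)(Jx) for all x,y ∈ h. -/
open LieAlgebra

attribute [local instance 100] LieRing.ofAssociativeRing

noncomputable section

section SD

variable {h V : Type*} [LieRing h] [LieAlgebra ℝ h] [AddCommGroup V] [Module ℝ V]

/-- The underlying type of the semidirect product `h ⋉_π V`. -/
def Sd (_π : h →ₗ⁅ℝ⁆ Module.End ℝ V) : Type _ := h × V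

namespace Sd

variable (π : h →ₗ⁅ℝ⁆ Module.End ℝ V)

instance : AddCommGroup (Sd π) := inferInstanceAs (AddCommGroup (h × V))
instance : Module ℝ (Sd π) := inferInstanceAs (Module ℝ (h × V))

variable {π}

/-- An element of the semidirect product. -/
def mk (x : h) (v : V) : Sd π := (x, v)

def pr1 (p : Sd π) : h := Prod.fst p
def pr2 (p : Sd π) : V := Prod.snd p

@[simp] lemma pr1_mk (x : h) (v : V) : pr1 (mk (π := π) x v) = x := rfl
@[simp] lemma pr2_mk (x : h) (v : V) : pr2 (mk (π := π) x v) = v := rfl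
@[simp] lemma mk_add_mk (x y : h) (u v : V) :
    (mk (π := π) x u) + (mk y v) = mk (x + y) (u + v) := rfl
@[simp] lemma smul_mk (t : ℝ) (x : h) (v : V) :
    t • (mk (π := π) x v) = mk (t • x) (t • v) := rfl
@[simp] lemma neg_mk (x : h) (v : V) : -(mk (π := π) x v) = mk (-x) (-v) := rfl
lemma ext_iff {p q : Sd π} : p = q ↔ pr1 p = pr1 q ∧ pr2 p = pr2 q := Prod.ext_iff
@[simp] lemma mk_inj {x y : h} {u v : V} :
    (mk (π := π) x u) = mk y v ↔ x = y ∧ u = v := Prod.ext_iff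
lemma mk_surj (p : Sd π) : ∃ x v, p = mk x v := ⟨pr1 p, pr2 p, rfl⟩

variable (π)

instance : LieRing (Sd π) where
  bracket p q := mk ⁅pr1 p, pr1 q⁆ (π (pr1 p) (pr2 q) - π (pr1 q) (pr2 p))
  add_lie p q r := by
    obtain ⟨x, u, rfl⟩ := mk_surj p; obtain ⟨y, v, rfl⟩ := mk_surj q
    obtain ⟨z, w, rfl⟩ := mk_surj r
    show mk _ _ = mk _ _ + mk _ _
    simp [add_lie, map_add]
    abel
  lie_add p q r := by
    obtain ⟨x, u, rfl⟩ := mk_surj p; obtain ⟨y, v, rfl⟩ := mk_surj q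
    obtain ⟨z, w, rfl⟩ := mk_surj r
    show mk _ _ = mk _ _ + mk _ _
    simp [lie_add, map_add]
    abel
  lie_self p := by
    obtain ⟨x, u, rfl⟩ := mk_surj p
    show mk _ _ = (0 : h × V)
    simp
    rfl
  leibniz_lie p q r := by
    obtain ⟨x, u, rfl⟩ := mk_surj p; obtain ⟨y, v, rfl⟩ := mk_surj q
    obtain ⟨z, w, rfl⟩ := mk_surj r
    show mk _ _ = mk _ _ + mk _ _
    have hxy : π ⁅x, y⁆ = π x * π y - π y * π x := by
      rw [LieHom.map_lie]; rfl
    have hyz : π ⁅y, z⁆ = π y * π z - π z * π y := by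
      rw [LieHom.map_lie]; rfl
    have hxz : π ⁅x, z⁆ = π x * π z - π z * π x := by
      rw [LieHom.map_lie]; rfl
    simp [hxy, hyz, hxz, LinearMap.sub_apply, Module.End.mul_apply, map_sub]
    abel

instance : LieAlgebra ℝ (Sd π) where
  lie_smul t p q := by
    obtain ⟨x, u, rfl⟩ := mk_surj p; obtain ⟨y, v, rfl⟩ := mk_surj q
    show mk _ _ = t • mk _ _
    simp [smul_sub]

@[simp] lemma lie_mk (x y : h) (u v : V) :
    ⁅(Sd.mk (π := π) x u), (Sd.mk (π := π) y v)⁆ = mk ⁅x, y⁆ (π x v - π y u) := rfl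

variable {π}

/-- The copy of `h` inside `h ⋉_π V`. -/
def hPart (π : h →ₗ⁅ℝ⁆ Module.End ℝ V) : Submodule ℝ (Sd π) where
  carrier := {p | pr2 p = 0}
  add_mem' := by
    rintro p q hp hq
    obtain ⟨x, u, rfl⟩ := mk_surj p; obtain ⟨y, v, rfl⟩ := mk_surj q
    simp_all [Set.mem_setOf_eq]
  zero_mem' := rfl
  smul_mem' := by
    rintro t p hp
    obtain ⟨x, u, rfl⟩ := mk_surj p
    simp_all [Set.mem_setOf_eq]

/-- The copy of `V` inside `h ⋉_π V`. -/
def vPart (π : h →ₗ⁅ℝ⁆ Module.End ℝ V) : Submodule ℝ (Sd π) where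
  carrier := {p | pr1 p = 0}
  add_mem' := by
    rintro p q hp hq
    obtain ⟨x, u, rfl⟩ := mk_surj p; obtain ⟨y, v, rfl⟩ := mk_surj q
    simp_all [Set.mem_setOf_eq]
  zero_mem' := rfl
  smul_mem' := by
    rintro t p hp
    obtain ⟨x, u, rfl⟩ := mk_surj p
    simp_all [Set.mem_setOf_eq]

end Sd

end SD

section Cpx

variable {g : Type*} [LieRing g] [LieAlgebra ℝ g]

/-- A complex structure on a real Lie algebra: `J² = -I` and the Nijenhuis tensor of `J`
vanishes. -/
def IsCpxStruct (J : g →ₗ[ℝ] g) : Prop :=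
  (∀ x, J (J x) = -x) ∧
  ∀ x y : g, ⁅J x, J y⁆ - ⁅x, y⁆ - J ⁅J x, y⁆ - J ⁅x, J y⁆ = 0

/-- An abelian complex structure. -/
def IsAbelianCpx (J : g →ₗ[ℝ] g) : Prop := ∀ x y : g, ⁅J x, J y⁆ = ⁅x, y⁆

/-- A bi-invariant complex structure. -/
def IsBiinvariant (J : g →ₗ[ℝ] g) : Prop := ∀ x y : g, J ⁅x, y⁆ = ⁅x, J y⁆

/-- A totally real (almost) complex structure on a semidirect product: `J h = V`. -/
def IsTotallyReal {h V : Type*} [LieRing h] [LieAlgebra ℝ h] [AddCommGroup V] [Module ℝ V]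
    (π : h →ₗ⁅ℝ⁆ Module.End ℝ V) (J : Sd π →ₗ[ℝ] Sd π) : Prop :=
  (Sd.hPart π).map J = Sd.vPart π

end Cpx


section DualRep

variable {h V : Type*} [LieRing h] [LieAlgebra ℝ h] [AddCommGroup V] [Module ℝ V]

/-- The dual representation `π*` of a representation `π`, `(π*(x)a)(u) = -a(π(x)u)`. -/
def dualRep (π : h →ₗ⁅ℝ⁆ Module.End ℝ V) : h →ₗ⁅ℝ⁆ Module.End ℝ (Module.Dual ℝ V) where
  toFun x := -(π x).dualMap
  map_add' x y := by ext φ v; simp [map_add]; abel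
  map_smul' t x := by ext φ v; simp
  map_lie' {x y} := by
    ext φ v
    have : π ⁅x, y⁆ = π x * π y - π y * π x := by rw [LieHom.map_lie]; rfl
    simp [Ring.lie_def, Module.End.mul_apply, this, LinearMap.sub_apply]

@[simp] lemma dualRep_apply (π : h →ₗ⁅ℝ⁆ Module.End ℝ V) (x : h) (φ : Module.Dual ℝ V)
    (v : V) : dualRep π x φ v = -φ (π x v) := rfl

end DualRep

section TanCot

variable (h : Type*) [LieRing h] [LieAlgebra ℝ h]

/-- The coadjoint representation of `h` on `h*`. -/
abbrev coadRep : h →ₗ⁅ℝ⁆ Module.End ℝ (Module.Dual ℝ h) := dualRep (LieAlgebra.ad ℝ h)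

/-- The tangent Lie algebra `T h = h ⋉_ad h`. -/
abbrev TangentAlg := Sd (LieAlgebra.ad ℝ h)

/-- The cotangent Lie algebra `T*h = h ⋉_ad* h*`. -/
abbrev CotangentAlg := Sd (coadRep h)

/-- The canonical neutral metric on the cotangent Lie algebra `T*h`:
`⟨(x,φ),(y,ψ)⟩ = ψ(x) + φ(y)`. -/
def canMetric (p q : CotangentAlg h) : ℝ := Sd.pr2 p (Sd.pr1 q) + Sd.pr2 q (Sd.pr1 p)

end TanCot

section MorePreds

variable {g : Type*} [LieRing g] [LieAlgebra ℝ g]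

/-- A derivation of a Lie algebra. -/
def IsDer (d : g →ₗ[ℝ] g) : Prop := ∀ x y : g, d ⁅x, y⁆ = ⁅d x, y⁆ + ⁅x, d y⁆

/-- The ascending series `a_l(J)` associated to an almost complex structure `J`. -/
def aSer (J : g →ₗ[ℝ] g) : ℕ → Set g
  | 0 => {0}
  | l + 1 => {x | (∀ y : g, ⁅x, y⁆ ∈ aSer J l) ∧ ∀ y : g, ⁅J x, y⁆ ∈ aSer J l}

/-- A nilpotent (almost) complex structure: `a_t(J) = g` for some `t`. -/
def IsNilpotentCpx (J : g →ₗ[ℝ] g) : Prop := ∃ t, aSer J t = Set.univ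

/-- An `r`-step nilpotent (almost) complex structure. -/
def IsNilpotentStepCpx (J : g →ₗ[ℝ] g) (r : ℕ) : Prop :=
  aSer J r = Set.univ ∧ ∀ s < r, aSer J s ≠ Set.univ

/-- A symplectic structure on a Lie algebra, as a bilinear, alternating, nondegenerate,
closed 2-form. -/
def IsSymplForm (ω : g → g → ℝ) : Prop :=
  (∀ x : g, IsLinearMap ℝ (ω x)) ∧ (∀ y : g, IsLinearMap ℝ (fun x => ω x y)) ∧
  (∀ x : g, ω x x = 0) ∧ (∀ x : g, (∀ y : g, ω x y = 0) → x = 0) ∧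
  ∀ x y z : g, ω ⁅x, y⁆ z + ω ⁅y, z⁆ x + ω ⁅z, x⁆ y = 0

/-- A Kähler structure: a compatible pair of a complex structure and a symplectic
structure. -/
def IsKahlerPair (J : g →ₗ[ℝ] g) (ω : g → g → ℝ) : Prop :=
  IsCpxStruct J ∧ IsSymplForm ω ∧ ∀ x y : g, ω (J x) (J y) = ω x y

end MorePreds

section LagSympl

variable {h V : Type*} [LieRing h] [LieAlgebra ℝ h] [AddCommGroup V] [Module ℝ V]

/-- A lagrangian symplectic structure on a semidirect product `h ⋉_π V`: both `h` and `V`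
are totally isotropic. -/
def IsLagrangianSympl (π : h →ₗ⁅ℝ⁆ Module.End ℝ V) (ω : Sd π → Sd π → ℝ) : Prop :=
  IsSymplForm ω ∧ (∀ x y : h, ω (Sd.mk x 0) (Sd.mk y 0) = 0) ∧
    ∀ u v : V, ω (Sd.mk 0 u) (Sd.mk 0 v) = 0

end LagSympl

section Solv3

/-- A `2 × 2` real matrix as an endomorphism of `ℝ²`. -/
def endOf (a b c d : ℝ) : Module.End ℝ (Fin 2 → ℝ) where
  toFun v := ![a * v 0 + b * v 1, c * v 0 + d * v 1]
  map_add' u v := by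
    funext i; fin_cases i <;> simp [Matrix.cons_val_zero, Matrix.cons_val_one] <;> ring
  map_smul' t v := by
    funext i; fin_cases i <;> simp [Matrix.cons_val_zero, Matrix.cons_val_one] <;> ring

/-- The representation of the abelian Lie algebra `ℝ` on `ℝ²` sending `t` to `t • A`. -/
def rep2 (A : Module.End ℝ (Fin 2 → ℝ)) : ℝ →ₗ⁅ℝ⁆ Module.End ℝ (Fin 2 → ℝ) where
  toFun t := t • A
  map_add' s t := by simp [add_smul]
  map_smul' s t := by simp [mul_smul]
  map_lie' {s t} := by
    ext v
    simp [Ring.lie_def, Module.End.mul_apply, smul_smul, mul_comm]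

/-- The solvable Lie algebra `ℝ ⋉_A ℝ²` determined by a `2 × 2` matrix `A`. -/
abbrev Solv3 (A : Module.End ℝ (Fin 2 → ℝ)) := Sd (rep2 A)

/-- The 3-dimensional Heisenberg Lie algebra `h1`: `[e1,e2] = e3`. -/
abbrev H1 := Solv3 (endOf 0 0 1 0)

/-- The Lie algebra `r3`: `[e1,e2] = e2`, `[e1,e3] = e2 + e3`. -/
abbrev R3 := Solv3 (endOf 1 1 0 1)

/-- The Lie algebra `r_{3,λ}`: `[e1,e2] = e2`, `[e1,e3] = λ e3`. -/
abbrev R3l (lam : ℝ) := Solv3 (endOf 1 0 0 lam)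

/-- The Lie algebra `r'_{3,η}`: `[e1,e2] = ηe2 - e3`, `[e1,e3] = e2 + ηe3`. -/
abbrev R3e' (eta : ℝ) := Solv3 (endOf eta 1 (-1) eta)

namespace Solv3

variable (A : Module.End ℝ (Fin 2 → ℝ))

/-- The basis vector `e1` of `ℝ ⋉_A ℝ²`. -/
def E1 : Solv3 A := Sd.mk 1 0
/-- The basis vector `e2` of `ℝ ⋉_A ℝ²`. -/
def E2 : Solv3 A := Sd.mk 0 ![1, 0]
/-- The basis vector `e3` of `ℝ ⋉_A ℝ²`. -/
def E3 : Solv3 A := Sd.mk 0 ![0, 1]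

/-- The dual basis vector `e1* ∈ (ℝ ⋉_A ℝ²)*`. -/
def D1 : Module.Dual ℝ (Solv3 A) := LinearMap.fst ℝ ℝ (Fin 2 → ℝ)
/-- The dual basis vector `e2* ∈ (ℝ ⋉_A ℝ²)*`. -/
def D2 : Module.Dual ℝ (Solv3 A) :=
  (LinearMap.proj 0).comp (LinearMap.snd ℝ ℝ (Fin 2 → ℝ))
/-- The dual basis vector `e3* ∈ (ℝ ⋉_A ℝ²)*`. -/
def D3 : Module.Dual ℝ (Solv3 A) :=
  (LinearMap.proj 1).comp (LinearMap.snd ℝ ℝ (Fin 2 → ℝ))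

end Solv3

end Solv3

section Simple3



/-- Structure-constant bracket of a concrete copy of `sl(2,ℝ)`. -/
def sl2Br (x y : Fin 3 → ℝ) : Fin 3 → ℝ :=
  ![2 * (x 2 * y 0 - y 2 * x 0), -2 * (x 2 * y 1 - y 2 * x 1), x 0 * y 1 - y 0 * x 1]

/-- Structure-constant bracket of a concrete copy of `so(3)`. -/
def so3Br (x y : Fin 3 → ℝ) : Fin 3 → ℝ :=
  ![-(x 2 * y 1 - y 2 * x 1), x 2 * y 0 - y 2 * x 0, x 0 * y 1 - y 0 * x 1]

/-- Structure-constant bracket of the complex Heisenberg algebra. -/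
def ch1Br (x y : Fin 3 → ℂ) : Fin 3 → ℂ := ![0, 0, x 0 * y 1 - y 0 * x 1]

section BrLemmas

lemma sl2Br_add_left (x y z : Fin 3 → ℝ) :
    sl2Br (x + y) z = sl2Br x z + sl2Br y z := by
  funext i; fin_cases i <;> simp [sl2Br] <;> ring
lemma sl2Br_add_right (x y z : Fin 3 → ℝ) :
    sl2Br x (y + z) = sl2Br x y + sl2Br x z := by
  funext i; fin_cases i <;> simp [sl2Br] <;> ring
lemma sl2Br_self (x : Fin 3 → ℝ) : sl2Br x x = 0 := by
  funext i; fin_cases i <;> simp [sl2Br] <;> ring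
lemma sl2Br_leibniz (x y z : Fin 3 → ℝ) :
    sl2Br x (sl2Br y z) = sl2Br (sl2Br x y) z + sl2Br y (sl2Br x z) := by
  funext i; fin_cases i <;> simp [sl2Br] <;> ring
lemma sl2Br_smul (t : ℝ) (x y : Fin 3 → ℝ) : sl2Br x (t • y) = t • sl2Br x y := by
  funext i; fin_cases i <;> simp [sl2Br] <;> ring

lemma so3Br_add_left (x y z : Fin 3 → ℝ) :
    so3Br (x + y) z = so3Br x z + so3Br y z := by
  funext i; fin_cases i <;> simp [so3Br] <;> ring
lemma so3Br_add_right (x y z : Fin 3 → ℝ) :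
    so3Br x (y + z) = so3Br x y + so3Br x z := by
  funext i; fin_cases i <;> simp [so3Br] <;> ring
lemma so3Br_self (x : Fin 3 → ℝ) : so3Br x x = 0 := by
  funext i; fin_cases i <;> simp [so3Br] <;> ring
lemma so3Br_leibniz (x y z : Fin 3 → ℝ) :
    so3Br x (so3Br y z) = so3Br (so3Br x y) z + so3Br y (so3Br x z) := by
  funext i; fin_cases i <;> simp [so3Br] <;> ring
lemma so3Br_smul (t : ℝ) (x y : Fin 3 → ℝ) : so3Br x (t • y) = t • so3Br x y := by
  funext i; fin_cases i <;> simp [so3Br] <;> ring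

lemma ch1Br_add_left (x y z : Fin 3 → ℂ) :
    ch1Br (x + y) z = ch1Br x z + ch1Br y z := by
  funext i; fin_cases i <;> simp [ch1Br] <;> ring
lemma ch1Br_add_right (x y z : Fin 3 → ℂ) :
    ch1Br x (y + z) = ch1Br x y + ch1Br x z := by
  funext i; fin_cases i <;> simp [ch1Br] <;> ring
lemma ch1Br_self (x : Fin 3 → ℂ) : ch1Br x x = 0 := by
  funext i; fin_cases i <;> simp [ch1Br] <;> ring
lemma ch1Br_leibniz (x y z : Fin 3 → ℂ) :
    ch1Br x (ch1Br y z) = ch1Br (ch1Br x y) z + ch1Br y (ch1Br x z) := by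
  funext i; fin_cases i <;> simp [ch1Br] <;> ring
lemma ch1Br_smul (t : ℝ) (x y : Fin 3 → ℂ) : ch1Br x (t • y) = t • ch1Br x y := by
  funext i; fin_cases i <;> simp [ch1Br] <;> ring

end BrLemmas

/-- A concrete copy of `sl(2,ℝ)`. -/
def SL2 : Type := Fin 3 → ℝ

namespace SL2
instance : AddCommGroup SL2 := inferInstanceAs (AddCommGroup (Fin 3 → ℝ))
instance : Module ℝ SL2 := inferInstanceAs (Module ℝ (Fin 3 → ℝ))
instance : LieRing SL2 where
  bracket := sl2Br
  add_lie := sl2Br_add_left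
  lie_add := sl2Br_add_right
  lie_self := sl2Br_self
  leibniz_lie := sl2Br_leibniz
instance : LieAlgebra ℝ SL2 where
  lie_smul := sl2Br_smul
def E1 : SL2 := ![1, 0, 0]
def E2 : SL2 := ![0, 1, 0]
def E3 : SL2 := ![0, 0, 1]
end SL2

/-- A concrete copy of `so(3)`. -/
def SO3 : Type := Fin 3 → ℝ

namespace SO3
instance : AddCommGroup SO3 := inferInstanceAs (AddCommGroup (Fin 3 → ℝ))
instance : Module ℝ SO3 := inferInstanceAs (Module ℝ (Fin 3 → ℝ))
instance : LieRing SO3 where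
  bracket := so3Br
  add_lie := so3Br_add_left
  lie_add := so3Br_add_right
  lie_self := so3Br_self
  leibniz_lie := so3Br_leibniz
instance : LieAlgebra ℝ SO3 where
  lie_smul := so3Br_smul
def E1 : SO3 := ![1, 0, 0]
def E2 : SO3 := ![0, 1, 0]
def E3 : SO3 := ![0, 0, 1]
end SO3

/-- The real Lie algebra underlying the complexification `h1 ⊗ ℂ` of the 3-dimensional
Heisenberg Lie algebra. -/
def CH1 : Type := Fin 3 → ℂ

namespace CH1
instance : AddCommGroup CH1 := inferInstanceAs (AddCommGroup (Fin 3 → ℂ))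
instance : Module ℝ CH1 := inferInstanceAs (Module ℝ (Fin 3 → ℂ))
instance : LieRing CH1 where
  bracket := ch1Br
  add_lie := ch1Br_add_left
  lie_add := ch1Br_add_right
  lie_self := ch1Br_self
  leibniz_lie := ch1Br_leibniz
instance : LieAlgebra ℝ CH1 where
  lie_smul := ch1Br_smul
end CH1

end Simple3

end

/-! Total reality puts `J h` inside the abelian ideal `V`, so abelianness of `J` gives
`[x, y] = [Jx, Jy] = 0` on `h`. Applied to the pair `(Jx, y)` together with `J² = -1` it gives
`[x, Jy] = [y, Jx]`, which is the second claim read off in `V`. -/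

section AbelianCpx

variable {g : Type*} [LieRing g] [LieAlgebra ℝ g] {J : g →ₗ[ℝ] g}

theorem IsAbelianCpx.lie_apply_comm (hab : IsAbelianCpx J) (hJ2 : ∀ x, J (J x) = -x)
    (x y : g) : ⁅x, J y⁆ = ⁅y, J x⁆ := by
  have hxy := hab (J x) y
  rw [hJ2, neg_lie] at hxy
  calc ⁅x, J y⁆ = -⁅J x, y⁆ := by rw [← hxy, neg_neg]
    _ = ⁅y, J x⁆ := lie_skew _ _

end AbelianCpx

namespace Sd

variable {h V : Type*} [LieRing h] [LieAlgebra ℝ h] [AddCommGroup V] [Module ℝ V]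
  {π : h →ₗ⁅ℝ⁆ Module.End ℝ V}

theorem lie_mk_zero_mk_zero (x y : h) :
    ⁅(mk (π := π) x 0), (mk (π := π) y 0)⁆ = mk ⁅x, y⁆ 0 := by
  simp

theorem lie_mk_zero_zero_mk (x : h) (v : V) :
    ⁅(mk (π := π) x 0), (mk (π := π) 0 v)⁆ = mk 0 (π x v) := by
  simp

theorem lie_zero_mk_zero_mk (u v : V) :
    ⁅(mk (π := π) 0 u), (mk (π := π) 0 v)⁆ = 0 := by
  rw [lie_mk, lie_zero, map_zero, LinearMap.zero_apply, LinearMap.zero_apply, sub_zero]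
  rfl

end Sd

namespace IsTotallyReal

variable {h V : Type*} [LieRing h] [LieAlgebra ℝ h] [AddCommGroup V] [Module ℝ V]
  {π : h →ₗ⁅ℝ⁆ Module.End ℝ V} {J : Sd π →ₗ[ℝ] Sd π}

theorem apply_mk (htr : IsTotallyReal π J) (x : h) :
    J (Sd.mk x 0) = Sd.mk 0 (Sd.pr2 (J (Sd.mk x 0))) := by
  have hV : J (Sd.mk x 0) ∈ Sd.vPart π := htr ▸ Submodule.mem_map_of_mem (p := Sd.hPart π) rfl
  exact Sd.ext_iff.mpr ⟨hV, rfl⟩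

end IsTotallyReal

theorem abelian_totallyReal_cpx_implies_abelian_general
    {h V : Type*} [LieRing h] [LieAlgebra ℝ h] [AddCommGroup V] [Module ℝ V]
    (π : h →ₗ⁅ℝ⁆ Module.End ℝ V) (J : Sd π →ₗ[ℝ] Sd π)
    (hJ : IsCpxStruct J) (hab : IsAbelianCpx J) (htr : IsTotallyReal π J) :
    IsLieAbelian h ∧
      ∀ x y : h, π x (Sd.pr2 (J (Sd.mk y 0))) = π y (Sd.pr2 (J (Sd.mk x 0))) := by
  refine ⟨⟨fun x y => ?_⟩, fun x y => ?_⟩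
  · have hxy := hab (Sd.mk x 0) (Sd.mk y 0)
    rw [htr.apply_mk x, htr.apply_mk y, Sd.lie_zero_mk_zero_mk, Sd.lie_mk_zero_mk_zero] at hxy
    exact (Sd.mk_inj.mp hxy).1.symm
  · have hxy := hab.lie_apply_comm hJ.1 (Sd.mk x 0) (Sd.mk y 0)
    rw [htr.apply_mk x, htr.apply_mk y, Sd.lie_mk_zero_zero_mk, Sd.lie_mk_zero_zero_mk] at hxy
    exact (Sd.mk_inj.mp hxy).2

/-- If `J` is an abelian totally real complex structure on `h ⋉_π V`, then
`h` is abelian and `π(x)(Jy) = π(y)(Jx)` for all `x, y ∈ h`. -/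
theorem abelian_totallyReal_cpx_implies_abelian
    {h V : Type*} [LieRing h] [LieAlgebra ℝ h] [AddCommGroup V] [Module ℝ V]
    [FiniteDimensional ℝ h] [FiniteDimensional ℝ V]
    (hdim : Module.finrank ℝ V = Module.finrank ℝ h)
    (π : h →ₗ⁅ℝ⁆ Module.End ℝ V) (J : Sd π →ₗ[ℝ] Sd π)
    (hJ : IsCpxStruct J) (hab : IsAbelianCpx J) (htr : IsTotallyReal π J) :
    IsLieAbelian h ∧
      ∀ x y : h, π x (Sd.pr2 (J (Sd.mk y 0))) = π y (Sd.pr2 (J (Sd.mk x 0))) :=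
  abelian_totallyReal_cpx_implies_abelian_general π J hJ hab htr
end

section
/- The tangent Lie algebra T h1 of the 3-dimensional Heisenberg Lie algebra admits both abelian complex structures and non-abelian complex structures, and every complex structure on T h1 is 2-step nilpotent. -/
open LieAlgebra

attribute [local instance 100] LieRing.ofAssociativeRing

/-! If `z` is central, the Nijenhuis condition at `(z, y)` says that `ad (J z)` commutes with `J`.
On a 2-step nilpotent Lie algebra the image of `ad (J z)` lies in the centre `𝔷`, so it lies in
the largest `J`-invariant subspace `𝔷 ∩ J⁻¹ 𝔷` of `𝔷`. When `dim 𝔷 ≤ 2` this subspace is `0` or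
`𝔷`: in the first case `J z` is central, in the second `J 𝔷 = 𝔷` outright. Hence `J 𝔷 ⊆ 𝔷`, so
`a₁(J) = 𝔷 ⊇ [g, g]` and `a₂(J) = g`. The centre of `T h1` is spanned by `e3` and `e6`. -/

open Module

namespace Sd

variable {h V : Type*} [LieRing h] [LieAlgebra ℝ h] [AddCommGroup V] [Module ℝ V]
  {π : h →ₗ⁅ℝ⁆ Module.End ℝ V}

@[simp] lemma mk_sub_mk (x y : h) (u v : V) :
    mk (π := π) x u - mk y v = mk (x - y) (u - v) := rfl

instance [Module.Finite ℝ h] [Module.Finite ℝ V] : Module.Finite ℝ (Sd π) :=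
  inferInstanceAs (Module.Finite ℝ (h × V))

end Sd

@[simp] lemma rep2_apply (A : Module.End ℝ (Fin 2 → ℝ)) (t : ℝ) : rep2 A t = t • A := rfl

@[simp] lemma endOf_apply (a b c d : ℝ) (v : Fin 2 → ℝ) :
    endOf a b c d v = ![a * v 0 + b * v 1, c * v 0 + d * v 1] := rfl

section ComplexStructure

variable {g : Type*} [LieRing g] [LieAlgebra ℝ g] {J : g →ₗ[ℝ] g}

lemma mem_center_iff_lie_eq_zero {z : g} : z ∈ center ℝ g ↔ ∀ y : g, ⁅z, y⁆ = 0 := by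
  rw [LieModule.mem_maxTrivSubmodule]
  exact forall_congr' fun y => by rw [← lie_skew, neg_eq_zero]

theorem IsCpxStruct.of_isAbelianCpx (hJ : ∀ x, J (J x) = -x) (hab : IsAbelianCpx J) :
    IsCpxStruct J := by
  refine ⟨hJ, fun x y => ?_⟩
  have hanti : ⁅J x, y⁆ = -⁅x, J y⁆ := by
    simpa [hJ] using (hab (J x) y).symm
  rw [hab, hanti, map_neg]
  abel

theorem IsCpxStruct.lie_apply_apply_of_mem_center (hJ : IsCpxStruct J) {z : g}
    (hz : z ∈ center ℝ g) (y : g) : ⁅J z, J y⁆ = J ⁅J z, y⁆ := by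
  simpa [mem_center_iff_lie_eq_zero.1 hz, sub_eq_zero] using hJ.2 z y

theorem linearIndependent_pair_apply (hJ : ∀ x, J (J x) = -x) {v : g} (hv : v ≠ 0) :
    LinearIndependent ℝ ![v, J v] := by
  refine LinearIndependent.pair_iff.2 fun s t hst => ?_
  have hJst : s • J v - t • v = 0 := by
    simpa [hJ, sub_eq_add_neg] using congrArg J hst
  have : (s ^ 2 + t ^ 2) • v = 0 := by
    calc (s ^ 2 + t ^ 2) • v = s • (s • v + t • J v) - t • (s • J v - t • v) := by
          simp only [smul_add, smul_sub, smul_smul]; module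
      _ = 0 := by rw [hst, hJst, smul_zero, smul_zero, sub_zero]
  have hsum : s ^ 2 + t ^ 2 = 0 := (smul_eq_zero.1 this).resolve_right hv
  constructor <;> nlinarith [sq_nonneg s, sq_nonneg t]

theorem Submodule.eq_of_le_of_apply_mem_of_finrank_le_two (hJ : ∀ x, J (J x) = -x)
    {W C : Submodule ℝ g} [FiniteDimensional ℝ C] (hWC : W ≤ C) (hW : ∀ w ∈ W, J w ∈ W)
    (hW0 : W ≠ ⊥) (hC : finrank ℝ C ≤ 2) : W = C := by
  obtain ⟨v, hvW, hv⟩ := W.ne_bot_iff.1 hW0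
  have hspan : Submodule.span ℝ (Set.range ![v, J v]) ≤ W := by
    rw [Submodule.span_le, Set.range_subset_iff]
    intro i; fin_cases i
    exacts [hvW, hW v hvW]
  have hrank := finrank_span_eq_card (linearIndependent_pair_apply hJ hv)
  have := Submodule.eq_of_le_of_finrank_le (hspan.trans hWC) (by simpa [hrank] using hC)
  exact le_antisymm hWC (this ▸ hspan)

theorem IsCpxStruct.apply_mem_center [FiniteDimensional ℝ g] (hJ : IsCpxStruct J)
    (hlie : ∀ x y : g, ⁅x, y⁆ ∈ center ℝ g) (hc : finrank ℝ (center ℝ g) ≤ 2) {z : g}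
    (hz : z ∈ center ℝ g) : J z ∈ center ℝ g := by
  set C := (center ℝ g).toSubmodule
  let W := C ⊓ C.comap J
  have hW : ∀ w ∈ W, J w ∈ W := fun w hw =>
    ⟨hw.2, by simpa [C, hJ.1 w] using hw.1⟩
  have hlieW : ∀ y, ⁅J z, y⁆ ∈ W := fun y =>
    ⟨hlie _ _, show J ⁅J z, y⁆ ∈ C from
      hJ.lie_apply_apply_of_mem_center hz y ▸ hlie (J z) (J y)⟩
  by_cases hW0 : W = ⊥
  · refine mem_center_iff_lie_eq_zero.2 fun y => ?_
    simpa [hW0] using hlieW y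
  · have hWC := Submodule.eq_of_le_of_apply_mem_of_finrank_le_two hJ.1 inf_le_left hW hW0 hc
    exact (hWC.ge hz).2

lemma mem_aSer_one_iff {x : g} : x ∈ aSer J 1 ↔ x ∈ center ℝ g ∧ J x ∈ center ℝ g := by
  simp only [mem_center_iff_lie_eq_zero]
  rfl

theorem isNilpotentStepCpx_two (hlie : ∀ x y : g, ⁅x, y⁆ ∈ center ℝ g)
    (hJ : ∀ z ∈ center ℝ g, J z ∈ center ℝ g) {x y : g} (hxy : ⁅x, y⁆ ≠ 0) :
    IsNilpotentStepCpx J 2 := by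
  have hlie_mem : ∀ u v : g, ⁅u, v⁆ ∈ aSer J 1 := fun u v =>
    mem_aSer_one_iff.2 ⟨hlie u v, hJ _ (hlie u v)⟩
  refine ⟨Set.eq_univ_of_forall fun u => ⟨hlie_mem u, hlie_mem (J u)⟩, fun s hs huniv => ?_⟩
  have hx : x ∈ aSer J s := huniv ▸ Set.mem_univ x
  interval_cases s
  · exact hxy (by rw [show x = 0 from hx, zero_lie])
  · exact hxy (mem_center_iff_lie_eq_zero.1 (mem_aSer_one_iff.1 hx).1 y)

end ComplexStructure

namespace TangentH1

abbrev G := TangentAlg H1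

-- `mk6 a b c d e f = a e1 + b e2 + c e3 + d e4 + e e5 + f e6`, where `e1, e2, e3` span the
-- first factor `h1` of `T h1 = h1 ⋉_ad h1` and `e4, e5, e6` the second; `Yi` reads off the
-- `ei`-coordinate.
def mk6 (a b c d e f : ℝ) : G := Sd.mk (Sd.mk a ![b, c]) (Sd.mk d ![e, f])

def Y1 : G →ₗ[ℝ] ℝ := ⟨⟨fun p => Sd.pr1 (Sd.pr1 p), fun _ _ => rfl⟩, fun _ _ => rfl⟩
def Y2 : G →ₗ[ℝ] ℝ := ⟨⟨fun p => Sd.pr2 (Sd.pr1 p) 0, fun _ _ => rfl⟩, fun _ _ => rfl⟩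
def Y3 : G →ₗ[ℝ] ℝ := ⟨⟨fun p => Sd.pr2 (Sd.pr1 p) 1, fun _ _ => rfl⟩, fun _ _ => rfl⟩
def Y4 : G →ₗ[ℝ] ℝ := ⟨⟨fun p => Sd.pr1 (Sd.pr2 p), fun _ _ => rfl⟩, fun _ _ => rfl⟩
def Y5 : G →ₗ[ℝ] ℝ := ⟨⟨fun p => Sd.pr2 (Sd.pr2 p) 0, fun _ _ => rfl⟩, fun _ _ => rfl⟩
def Y6 : G →ₗ[ℝ] ℝ := ⟨⟨fun p => Sd.pr2 (Sd.pr2 p) 1, fun _ _ => rfl⟩, fun _ _ => rfl⟩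

section
variable (a b c d e f : ℝ)
@[simp] lemma Y1_mk6 : Y1 (mk6 a b c d e f) = a := rfl
@[simp] lemma Y2_mk6 : Y2 (mk6 a b c d e f) = b := rfl
@[simp] lemma Y3_mk6 : Y3 (mk6 a b c d e f) = c := rfl
@[simp] lemma Y4_mk6 : Y4 (mk6 a b c d e f) = d := rfl
@[simp] lemma Y5_mk6 : Y5 (mk6 a b c d e f) = e := rfl
@[simp] lemma Y6_mk6 : Y6 (mk6 a b c d e f) = f := rfl
end

lemma eq_mk6 (p : G) : p = mk6 (Y1 p) (Y2 p) (Y3 p) (Y4 p) (Y5 p) (Y6 p) := by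
  obtain ⟨⟨a, u⟩, ⟨d, w⟩⟩ := p
  have hu : ![u 0, u 1] = u := FinVec.etaExpand_eq u
  have hw : ![w 0, w 1] = w := FinVec.etaExpand_eq w
  change _ = ((a, ![u 0, u 1]), d, ![w 0, w 1])
  rw [hu, hw]
  rfl

lemma ext6 {p q : G} (h1 : Y1 p = Y1 q) (h2 : Y2 p = Y2 q) (h3 : Y3 p = Y3 q)
    (h4 : Y4 p = Y4 q) (h5 : Y5 p = Y5 q) (h6 : Y6 p = Y6 q) : p = q := by
  rw [eq_mk6 p, eq_mk6 q, h1, h2, h3, h4, h5, h6]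

lemma lie_mk6 (a b c d e f a' b' c' d' e' f' : ℝ) :
    ⁅mk6 a b c d e f, mk6 a' b' c' d' e' f'⁆
      = mk6 0 0 (a * b' - a' * b) 0 0 (a * e' - a' * e + d * b' - d' * b) := by
  simp [mk6, Ring.lie_def, mul_comm]
  ring

lemma lie_eq_mk6 (p q : G) : ⁅p, q⁆ = mk6 0 0 (Y1 p * Y2 q - Y1 q * Y2 p) 0 0
    (Y1 p * Y5 q - Y1 q * Y5 p + Y4 p * Y2 q - Y4 q * Y2 p) := by
  conv_lhs => rw [eq_mk6 p, eq_mk6 q, lie_mk6]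

def E1 : G := mk6 1 0 0 0 0 0
def E2 : G := mk6 0 1 0 0 0 0
def E3 : G := mk6 0 0 1 0 0 0
def E6 : G := mk6 0 0 0 0 0 1

lemma mem_center_iff {z : G} :
    z ∈ center ℝ G ↔ Y1 z = 0 ∧ Y2 z = 0 ∧ Y4 z = 0 ∧ Y5 z = 0 := by
  rw [mem_center_iff_lie_eq_zero]
  refine ⟨fun hz => ?_, fun ⟨h1, h2, h4, h5⟩ y => ext6 ?_ ?_ ?_ ?_ ?_ ?_⟩
  · have h13 := congrArg Y3 (hz E1)
    have h16 := congrArg Y6 (hz E1)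
    have h23 := congrArg Y3 (hz E2)
    have h26 := congrArg Y6 (hz E2)
    simp [lie_eq_mk6, E1, E2] at h13 h16 h23 h26
    exact ⟨h23, h13, h26, h16⟩
  all_goals simp [lie_eq_mk6, h1, h2, h4, h5]

lemma lie_mem_center (x y : G) : ⁅x, y⁆ ∈ center ℝ G := by
  rw [mem_center_iff, lie_eq_mk6]
  simp

lemma center_le_span : (center ℝ G).toSubmodule ≤ Submodule.span ℝ (Set.range ![E3, E6]) := by
  intro z hz
  obtain ⟨h1, h2, h4, h5⟩ := mem_center_iff.1 hz
  have hz_eq : z = Y3 z • E3 + Y6 z • E6 := by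
    apply ext6 <;> simp [E3, E6, h1, h2, h4, h5]
  rw [hz_eq]
  exact Submodule.add_mem _ (Submodule.smul_mem _ _ (Submodule.subset_span ⟨0, rfl⟩))
    (Submodule.smul_mem _ _ (Submodule.subset_span ⟨1, rfl⟩))

lemma finrank_center_le_two : finrank ℝ (center ℝ G) ≤ 2 :=
  (Submodule.finrank_mono center_le_span).trans (finrank_range_le_card _)

lemma lie_E1_E2_ne_zero : ⁅E1, E2⁆ ≠ 0 := fun h => by
  simpa [lie_eq_mk6, E1, E2] using congrArg Y3 h

def abelianJ : G →ₗ[ℝ] G where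
  toFun p := mk6 (-Y2 p) (Y1 p) (-Y6 p) (-Y5 p) (Y4 p) (Y3 p)
  map_add' p q := by apply ext6 <;> simp <;> ring
  map_smul' t p := by apply ext6 <;> simp

lemma abelianJ_apply_apply (p : G) : abelianJ (abelianJ p) = -p := by
  apply ext6 <;> simp [abelianJ]

lemma isAbelianCpx_abelianJ : IsAbelianCpx abelianJ := fun p q => by
  rw [lie_eq_mk6, lie_eq_mk6]
  apply ext6 <;> simp [abelianJ] <;> ring

-- The factor `2` is forced by the Nijenhuis condition at `(e1, e2)`.
noncomputable def nonAbelianJ : G →ₗ[ℝ] G where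
  toFun p := mk6 (-Y4 p) (-Y5 p) (-Y6 p / 2) (Y1 p) (Y2 p) (2 * Y3 p)
  map_add' p q := by apply ext6 <;> simp <;> ring
  map_smul' t p := by apply ext6 <;> simp <;> ring

lemma isCpxStruct_nonAbelianJ : IsCpxStruct nonAbelianJ := by
  refine ⟨fun p => ?_, fun p q => ?_⟩
  · apply ext6 <;> simp [nonAbelianJ] <;> ring
  · simp only [lie_eq_mk6]
    apply ext6 <;> simp [nonAbelianJ] <;> ring

lemma not_isAbelianCpx_nonAbelianJ : ¬IsAbelianCpx nonAbelianJ := fun h => by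
  simpa [lie_eq_mk6, nonAbelianJ, E1, E2] using congrArg Y3 (h E1 E2)

end TangentH1

/-- `T h1` admits abelian and non-abelian complex structures, and every
complex structure on `T h1` is 2-step nilpotent. -/
theorem tangent_h1_cpx_structures :
    (∃ J : TangentAlg H1 →ₗ[ℝ] TangentAlg H1, IsCpxStruct J ∧ IsAbelianCpx J) ∧
    (∃ J : TangentAlg H1 →ₗ[ℝ] TangentAlg H1, IsCpxStruct J ∧ ¬IsAbelianCpx J) ∧
    ∀ J : TangentAlg H1 →ₗ[ℝ] TangentAlg H1, IsCpxStruct J → IsNilpotentStepCpx J 2 := by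
  refine ⟨⟨TangentH1.abelianJ, ?_, TangentH1.isAbelianCpx_abelianJ⟩,
    ⟨TangentH1.nonAbelianJ, TangentH1.isCpxStruct_nonAbelianJ, TangentH1.not_isAbelianCpx_nonAbelianJ⟩,
    fun J hJ => ?_⟩
  · exact .of_isAbelianCpx TangentH1.abelianJ_apply_apply TangentH1.isAbelianCpx_abelianJ
  · have hJc : ∀ z ∈ center ℝ _, J z ∈ center ℝ _ := fun z hz =>
      hJ.apply_mem_center TangentH1.lie_mem_center TangentH1.finrank_center_le_two hz
    exact isNilpotentStepCpx_two TangentH1.lie_mem_center hJc TangentH1.lie_E1_E2_ne_zero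
end
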